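/- Let t ≠ {∅} be a full binary tree with h = S(t) ≥ 1, let u be the lexicographically maximal vertex of t with S_u(t) = h, and define t^free = θ_{u1}t if h is even and θ_{u2}t if h is odd, and t^fix = θ_{u2}t if h is even and θ_{u1}t if h is odd. Then S(t^fix) = ⌈h/2⌉ − 1 = ⌊(h−1)/2⌋, and ⌊h/2⌋ ≤ S(t^free) ≤ h − 1. -/

import Mathlib

/-- Words over the alphabet {1,2}, encoded as lists of booleans (`false` = 1, `true` = 2). -/
abbrev Word := List Bool

/-- Longest common prefix of two words (`u ∧ v`). -/
def lcp : Word → Word → Word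
  | a :: as, b :: bs => if a = b then a :: lcp as bs else []
  | _, _ => []

/-- The lexicographic (strict) order on words; a strict prefix is smaller. -/
def wlex (u v : Word) : Prop := List.Lex (· < ·) u v

/-- A binary tree: a finite, prefix-closed set of words containing the empty word. -/
def IsBinaryTree (t : Set Word) : Prop :=
  t.Finite ∧ ([] : Word) ∈ t ∧ ∀ u ∈ t, ∀ v : Word, v <+: u → v ∈ t

/-- Fullness: each vertex has either zero or two children. -/
def IsFull (t : Set Word) : Prop :=
  ∀ u ∈ t, (u ++ [false] ∈ t ↔ u ++ [true] ∈ t)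

def IsFullBinaryTree (t : Set Word) : Prop := IsBinaryTree t ∧ IsFull t

/-- `φ` is an embedding of `t` into `t'`: injective on `t`, strictly increasing for the
lexicographic order, and preserving longest common prefixes. -/
def IsEmbedding (t t' : Set Word) (φ : Word → Word) : Prop :=
  (∀ u ∈ t, φ u ∈ t') ∧
  (∀ u ∈ t, ∀ v ∈ t, u ≠ v → φ u ≠ φ v) ∧
  (∀ u ∈ t, ∀ v ∈ t, wlex u v → wlex (φ u) (φ v)) ∧
  (∀ u ∈ t, ∀ v ∈ t, φ (lcp u v) = lcp (φ u) (φ v))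

/-- `t` can be embedded in `t'`. -/
def Embeds (t t' : Set Word) : Prop := ∃ φ, IsEmbedding t t' φ

/-- `graft b t = b · t`, the copy of `t` rooted at the child `b` of the root. -/
def graft (b : Bool) (t : Set Word) : Set Word := (fun w => b :: w) '' t

/-- The interpolating trees: τ₀ = {∅}, τ₁ = {∅,1,2},
τ_{2m} = {∅} ∪ 1·τ_m ∪ 2·τ_{m-1}, τ_{2m+1} = {∅} ∪ 1·τ_m ∪ 2·τ_m (for m ≥ 1). -/
def tau : ℕ → Set Word
  | 0 => {[]}
  | 1 => {[], [false], [true]}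
  | n + 2 => {[]} ∪ graft false (tau ((n + 2) / 2)) ∪ graft true (tau ((n + 1) / 2))
termination_by n => n
decreasing_by all_goals omega

/-- The subtree of `t` rooted at `u`: θ_u t = {v : uv ∈ t}. -/
def subtreeAt (u : Word) (t : Set Word) : Set Word := {v | u ++ v ∈ t}

/-- The refined Horton–Strahler number S(t) = max {r : τ_r embeds in t}. -/
noncomputable def RHS (t : Set Word) : ℕ := sSup {r | Embeds (tau r) t}

/-- S_u(t) = S(θ_u t). -/
noncomputable def Sv (u : Word) (t : Set Word) : ℕ := RHS (subtreeAt u t)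

/-- The set of internal vertices of `t` (those having a child in `t`). -/
def internals (t : Set Word) : Set Word :=
  {u | u ∈ t ∧ (u ++ [false] ∈ t ∨ u ++ [true] ∈ t)}


/-! `τ_n` (`n ≥ 1`) is the tree whose root has the subtrees `τ_⌊n/2⌋` and `τ_⌊(n-1)/2⌋`, and an
embedding of such a tree into `s` amounts to a vertex `v ∈ s` together with embeddings of the two
subtrees into `θ_{v1} s` and `θ_{v2} s`. So `h ≤ S_u(t)` yields a vertex `uv` with
`S_{uv1}(t) ≥ ⌊h/2⌋` and `S_{uv2}(t) ≥ ⌊(h-1)/2⌋`, and conversely these bounds give `S_{uv}(t) ≥ h`.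
Lexicographic maximality of `u` forces `v = ∅` and `S_{ub}(t) < h` for both children; finally
`S_{u1}(t) ≥ ⌈h/2⌉` together with `S_{u2}(t) ≥ ⌊h/2⌋` would give `S_u(t) ≥ h + 1`, which decides,
according to the parity of `h`, which child is pinned down. -/

@[simp] lemma lcp_nil_left (x : Word) : lcp [] x = [] := by cases x <;> rfl

@[simp] lemma lcp_nil_right (x : Word) : lcp x [] = [] := by cases x <;> rfl

lemma lcp_cons_cons (a b : Bool) (x y : Word) :
    lcp (a :: x) (b :: y) = if a = b then a :: lcp x y else [] := rfl

@[simp] lemma lcp_append (p x y : Word) : lcp (p ++ x) (p ++ y) = p ++ lcp x y := by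
  induction p with
  | nil => rfl
  | cons a p ih => simp [lcp_cons_cons, ih]

lemma lcp_prefix_left (x y : Word) : lcp x y <+: x := by
  induction x generalizing y with
  | nil => simp
  | cons a x ih =>
    cases y with
    | nil => simp
    | cons b y =>
      rw [lcp_cons_cons]
      split_ifs
      · exact List.cons_prefix_cons.2 ⟨rfl, ih y⟩
      · exact List.nil_prefix

@[simp] lemma wlex_append (p : Word) {x y : Word} : wlex (p ++ x) (p ++ y) ↔ wlex x y := by
  induction p with
  | nil => rfl
  | cons a p ih => exact List.lex_cons_iff.trans ih

lemma not_wlex_nil (x : Word) : ¬ wlex x [] := nofun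

lemma not_wlex_append_left (u w : Word) : ¬ wlex (u ++ w) u := by
  simpa using (wlex_append u (x := w) (y := [])).not.2 (not_wlex_nil w)

lemma heads_of_wlex_of_lcp_eq_nil {c c' : Bool} {r r' : Word}
    (hl : lcp (c :: r) (c' :: r') = []) (hw : wlex (c :: r) (c' :: r')) : c = false ∧ c' = true := by
  unfold wlex at hw
  cases hw with
  | cons => simp [lcp_cons_cons] at hl
  | rel hw => revert hw; cases c <;> cases c' <;> decide

@[simp] lemma subtreeAt_subtreeAt (u v : Word) (t : Set Word) :
    subtreeAt v (subtreeAt u t) = subtreeAt (u ++ v) t := by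
  ext w
  simp [subtreeAt]

@[simp] lemma nil_mem_subtreeAt {u : Word} {t : Set Word} : [] ∈ subtreeAt u t ↔ u ∈ t := by
  simp [subtreeAt]

lemma subtreeAt_finite {t : Set Word} (ht : t.Finite) (u : Word) : (subtreeAt u t).Finite :=
  ht.preimage (List.append_right_injective u).injOn

/-- `node T = {∅} ∪ 1·(T false) ∪ 2·(T true)`. -/
def node (T : Bool → Set Word) : Set Word :=
  {w | match w with
    | [] => True
    | b :: x => x ∈ T b}

@[simp] lemma nil_mem_node (T : Bool → Set Word) : [] ∈ node T := trivial

@[simp] lemma cons_mem_node {T : Bool → Set Word} {b : Bool} {x : Word} :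
    b :: x ∈ node T ↔ x ∈ T b := Iff.rfl

lemma encard_node (T : Bool → Set Word) :
    (node T).encard = 1 + (T false).encard + (T true).encard := by
  have hsplit : node T = insert [] (graft false (T false) ∪ graft true (T true)) := by
    ext (_ | ⟨_ | _, x⟩) <;> simp [graft]
  have hdisj : Disjoint (graft false (T false)) (graft true (T true)) :=
    Set.disjoint_left.2 (by simp [graft])
  rw [hsplit, Set.encard_insert_of_notMem (by simp [graft]), Set.encard_union_eq hdisj, graft, graft,
    List.cons_injective.encard_image, List.cons_injective.encard_image, add_comm, ← add_assoc]

lemma Embeds.of_subset {a b : Set Word} (h : a ⊆ b) : Embeds a b :=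
  ⟨id, h, fun _ _ _ _ => id, fun _ _ _ _ => id, fun _ _ _ _ => rfl⟩

lemma Embeds.trans {a b c : Set Word} (hab : Embeds a b) (hbc : Embeds b c) : Embeds a c := by
  obtain ⟨φ, mφ, iφ, oφ, lφ⟩ := hab
  obtain ⟨ψ, mψ, iψ, oψ, lψ⟩ := hbc
  refine ⟨ψ ∘ φ, fun u hu => mψ _ (mφ _ hu),
    fun u hu v hv huv => iψ _ (mφ _ hu) _ (mφ _ hv) (iφ _ hu _ hv huv),
    fun u hu v hv huv => oψ _ (mφ _ hu) _ (mφ _ hv) (oφ _ hu _ hv huv), fun u hu v hv => ?_⟩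
  simp only [Function.comp_apply, lφ _ hu _ hv, lψ _ (mφ _ hu) _ (mφ _ hv)]

lemma Embeds.encard_le {a b : Set Word} (h : Embeds a b) : a.encard ≤ b.encard := by
  obtain ⟨φ, mφ, iφ, -, -⟩ := h
  have hinj : Set.InjOn φ a := fun u hu v hv => not_imp_not.1 (iφ u hu v hv)
  rw [← hinj.encard_image]
  exact Set.encard_le_encard (Set.image_subset_iff.2 mφ)

lemma embeds_subtreeAt (v : Word) (s : Set Word) : Embeds (subtreeAt v s) s :=
  ⟨(v ++ ·), fun _ hw => hw, fun _ _ _ _ hne h => hne (List.append_cancel_left h),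
    fun _ _ _ _ h => (wlex_append v).2 h, fun x _ y _ => (lcp_append v x y).symm⟩

lemma Embeds.node {A B : Bool → Set Word} (h : ∀ b, Embeds (A b) (B b)) :
    Embeds (node A) (node B) := by
  choose ψ hψ using h
  let φ : Word → Word
    | [] => []
    | b :: x => b :: ψ b x
  refine ⟨φ, ?_, ?_, ?_, ?_⟩
  · rintro (_ | ⟨b, x⟩) hx
    exacts [trivial, (hψ b).1 x hx]
  · rintro (_ | ⟨b, x⟩) hx (_ | ⟨b', y⟩) hy hne h
    · exact hne rfl
    · exact List.cons_ne_nil _ _ h.symm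
    · exact List.cons_ne_nil _ _ h
    · obtain ⟨rfl, h⟩ := List.cons.inj h
      exact (hψ b).2.1 x hx y hy (fun hxy => hne (hxy ▸ rfl)) h
  · rintro (_ | ⟨b, x⟩) hx (_ | ⟨b', y⟩) hy hlt
    · exact absurd hlt (not_wlex_nil _)
    · exact List.Lex.nil
    · exact absurd hlt (not_wlex_nil _)
    · unfold wlex at hlt
      cases hlt with
      | cons hlt => exact List.Lex.cons ((hψ b).2.2.1 x hx y hy hlt)
      | rel hlt => exact List.Lex.rel hlt
  · rintro (_ | ⟨b, x⟩) hx (_ | ⟨b', y⟩) hy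
    · rfl
    · rfl
    · rfl
    · rw [lcp_cons_cons]
      split_ifs with hb
      · subst hb
        show b :: ψ b (lcp x y) = lcp (b :: ψ b x) (b :: ψ b y)
        rw [lcp_cons_cons, if_pos rfl, (hψ b).2.2.2 x hx y hy]
      · show [] = lcp (b :: ψ b x) (b' :: ψ b' y)
        rw [lcp_cons_cons, if_neg hb]

lemma node_subtreeAt_subset {s : Set Word} {v : Word} (hv : v ∈ s) :
    node (fun b => subtreeAt (v ++ [b]) s) ⊆ subtreeAt v s := by
  rintro (_ | ⟨b, x⟩) hx
  · simpa using hv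
  · simpa [subtreeAt] using hx

lemma IsEmbedding.root_prefix {a s : Set Word} {φ : Word → Word} (hφ : IsEmbedding a s φ)
    (h0 : [] ∈ a) {w : Word} (hw : w ∈ a) : φ [] <+: φ w := by
  have := hφ.2.2.2 w hw [] h0
  rw [lcp_nil_right] at this
  exact this ▸ lcp_prefix_left _ _

lemma IsEmbedding.restrict_subtreeAt {a s : Set Word} {φ : Word → Word} (hφ : IsEmbedding a s φ)
    (c q : Word) (hq : ∀ x ∈ subtreeAt c a, q <+: φ (c ++ x)) :
    IsEmbedding (subtreeAt c a) (subtreeAt q s) (fun x => (φ (c ++ x)).drop q.length) := by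
  obtain ⟨mφ, iφ, oφ, lφ⟩ := hφ
  have hψ : ∀ x ∈ subtreeAt c a, φ (c ++ x) = q ++ (φ (c ++ x)).drop q.length :=
    fun x hx => (List.prefix_iff_eq_append.1 (hq x hx)).symm
  refine ⟨fun x hx => ?_, fun x hx y hy hne h => ?_, fun x hx y hy h => ?_, fun x hx y hy => ?_⟩
  · change q ++ _ ∈ s
    rw [← hψ x hx]
    exact mφ _ hx
  · exact iφ _ hx _ hy (by simpa using hne) (by rw [hψ x hx, hψ y hy]; exact congrArg _ h)
  · have := oφ _ hx _ hy ((wlex_append c).2 h)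
    rwa [hψ x hx, hψ y hy, wlex_append] at this
  · have := lφ _ hx _ hy
    rw [lcp_append, hψ x hx, hψ y hy, lcp_append] at this
    simp only [this, List.drop_left]

/-- The two branch images meet exactly at `φ []` and keep the order `1 < 2`, so they leave
`φ []` through its children `1` and `2` respectively. -/
lemma IsEmbedding.prefix_cons_of_node {T : Bool → Set Word} {s : Set Word} {φ : Word → Word}
    (hφ : IsEmbedding (node T) s φ) {x y : Word} (hx : x ∈ T false) (hy : y ∈ T true) :
    φ [] ++ [false] <+: φ (false :: x) ∧ φ [] ++ [true] <+: φ (true :: y) := by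
  have hx' : false :: x ∈ node T := hx
  have hy' : true :: y ∈ node T := hy
  obtain ⟨q, hq⟩ := hφ.root_prefix (nil_mem_node T) hx'
  obtain ⟨q', hq'⟩ := hφ.root_prefix (nil_mem_node T) hy'
  have hlcp : lcp q q' = [] := by
    have := hφ.2.2.2 _ hx' _ hy'
    rw [← hq, ← hq', lcp_append] at this
    simpa [lcp_cons_cons] using this.symm
  have hlex : wlex q q' := by
    have := hφ.2.2.1 _ hx' _ hy' (List.Lex.rel (by decide))
    rwa [← hq, ← hq', wlex_append] at this
  have hq₀ : q ≠ [] := by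
    rintro rfl
    exact hφ.2.1 _ hx' _ (nil_mem_node T) (by simp) (by simpa using hq.symm)
  have hq₀' : q' ≠ [] := by
    rintro rfl
    exact not_wlex_nil _ hlex
  obtain ⟨c, r, rfl⟩ := List.exists_cons_of_ne_nil hq₀
  obtain ⟨c', r', rfl⟩ := List.exists_cons_of_ne_nil hq₀'
  obtain ⟨rfl, rfl⟩ := heads_of_wlex_of_lcp_eq_nil hlcp hlex
  exact ⟨⟨r, by simpa using hq⟩, ⟨r', by simpa using hq'⟩⟩

theorem embeds_node_iff {T : Bool → Set Word} (hT : ∀ b, (T b).Nonempty) {s : Set Word} :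
    Embeds (node T) s ↔ ∃ v ∈ s, ∀ b, Embeds (T b) (subtreeAt (v ++ [b]) s) := by
  constructor
  · rintro ⟨φ, hφ⟩
    refine ⟨φ [], hφ.1 _ trivial, fun b => ⟨_, hφ.restrict_subtreeAt [b] _ fun x hx => ?_⟩⟩
    obtain ⟨y, hy⟩ := hT !b
    cases b
    exacts [(hφ.prefix_cons_of_node hx hy).1, (hφ.prefix_cons_of_node hy hx).2]
  · rintro ⟨v, hv, h⟩
    exact ((Embeds.node h).trans (.of_subset (node_subtreeAt_subset hv))).trans
      (embeds_subtreeAt v s)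

lemma tau_zero : tau 0 = {[]} := by rw [tau]

lemma tau_eq_node {n : ℕ} (hn : 1 ≤ n) :
    tau n = node fun b => tau (bif b then (n - 1) / 2 else n / 2) := by
  obtain ⟨_ | k, rfl⟩ : ∃ k, n = k + 1 := ⟨n - 1, by omega⟩
  · ext (_ | ⟨_ | _, x⟩) <;> simp [tau]
  · show tau (k + 2) = node fun b => tau (bif b then (k + 1) / 2 else (k + 2) / 2)
    rw [tau]
    ext (_ | ⟨_ | _, x⟩) <;> simp [graft]

lemma nil_mem_tau (n : ℕ) : [] ∈ tau n := by
  rcases Nat.eq_zero_or_pos n with rfl | hn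
  · simp [tau_zero]
  · rw [tau_eq_node hn]
    trivial

lemma le_encard_tau (n : ℕ) : (n : ℕ∞) ≤ (tau n).encard := by
  induction n using Nat.strong_induction_on with
  | _ n ih =>
    rcases Nat.eq_zero_or_pos n with rfl | hn
    · simp
    rw [tau_eq_node hn, encard_node]
    calc (n : ℕ∞) = 1 + ((n / 2 : ℕ) : ℕ∞) + (((n - 1) / 2 : ℕ) : ℕ∞) := by norm_cast; omega
      _ ≤ _ := by gcongr <;> exact ih _ (by omega)

lemma embeds_tau_of_le {r s : ℕ} (h : r ≤ s) : Embeds (tau r) (tau s) := by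
  induction s using Nat.strong_induction_on generalizing r with
  | _ s ih =>
    rcases Nat.eq_zero_or_pos r with rfl | hr
    · exact .of_subset (by simpa [tau_zero] using nil_mem_tau s)
    rw [tau_eq_node hr, tau_eq_node (hr.trans_le h)]
    exact .node fun b => ih _ (by cases b <;> simp <;> omega) (by cases b <;> simp <;> omega)

theorem embeds_tau_iff {n : ℕ} (hn : 1 ≤ n) {s : Set Word} :
    Embeds (tau n) s ↔ ∃ v ∈ s, Embeds (tau (n / 2)) (subtreeAt (v ++ [false]) s) ∧
      Embeds (tau ((n - 1) / 2)) (subtreeAt (v ++ [true]) s) := by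
  rw [tau_eq_node hn, embeds_node_iff fun _ => ⟨[], nil_mem_tau _⟩]
  simp only [Bool.forall_bool, cond_false, cond_true]

lemma bddAbove_embeds_tau {t : Set Word} (ht : t.Finite) : BddAbove {r | Embeds (tau r) t} := by
  refine ⟨t.ncard, fun r hr => ?_⟩
  have := (le_encard_tau r).trans hr.encard_le
  rw [← ht.cast_ncard_eq] at this
  exact_mod_cast this

lemma le_RHS_of_embeds {t : Set Word} (ht : t.Finite) {r : ℕ} (h : Embeds (tau r) t) :
    r ≤ RHS t :=
  le_csSup (bddAbove_embeds_tau ht) h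

lemma le_RHS_iff {t : Set Word} (ht : t.Finite) (h0 : [] ∈ t) {r : ℕ} :
    r ≤ RHS t ↔ Embeds (tau r) t := by
  refine ⟨fun h => (embeds_tau_of_le h).trans ?_, le_RHS_of_embeds ht⟩
  exact Nat.sSup_mem ⟨0, .of_subset (by simpa [tau_zero])⟩ (bddAbove_embeds_tau ht)

lemma RHS_mono {a b : Set Word} (hb : b.Finite) (h : Embeds a b) : RHS a ≤ RHS b :=
  csSup_le_csSup' (bddAbove_embeds_tau hb) fun _ hr => hr.trans h

lemma Sv_append_le {t : Set Word} (ht : t.Finite) (u v : Word) : Sv (u ++ v) t ≤ Sv u t := by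
  unfold Sv
  rw [← subtreeAt_subtreeAt]
  exact RHS_mono (subtreeAt_finite ht u) (embeds_subtreeAt v _)

lemma le_Sv_iff {t : Set Word} (ht : t.Finite) {w : Word} (hw : w ∈ t) {r : ℕ} :
    r ≤ Sv w t ↔ Embeds (tau r) (subtreeAt w t) :=
  le_RHS_iff (subtreeAt_finite ht w) (nil_mem_subtreeAt.2 hw)

lemma Sv_append_lt_of_lexMax {t : Set Word} (ht : t.Finite) {u : Word} {h : ℕ}
    (humax : Sv u t = h) (hlexmax : ∀ w ∈ t, Sv w t = h → w = u ∨ wlex w u)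
    {w : Word} (hw : w ≠ []) (huw : u ++ w ∈ t) : Sv (u ++ w) t < h := by
  refine (humax ▸ Sv_append_le ht u w).lt_of_ne fun heq => ?_
  rcases hlexmax _ huw heq with h' | h'
  · exact hw (by simpa using h')
  · exact not_wlex_append_left u w h'

namespace IsBinaryTree

variable {t : Set Word} (ht : IsBinaryTree t)
include ht

lemma mem_of_append {u v : Word} (h : u ++ v ∈ t) : u ∈ t :=
  ht.2.2 _ h u (List.prefix_append u v)

lemma mem_of_embeds_tau {u : Word} {r : ℕ} (h : Embeds (tau r) (subtreeAt u t)) : u ∈ t :=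
  let ⟨_, hφ⟩ := h
  ht.mem_of_append (hφ.1 [] (nil_mem_tau r))

lemma exists_children_of_le_Sv {w : Word} (hw : w ∈ t) {n : ℕ} (hn : 1 ≤ n) (h : n ≤ Sv w t) :
    ∃ v, w ++ v ++ [false] ∈ t ∧ w ++ v ++ [true] ∈ t ∧
      n / 2 ≤ Sv (w ++ v ++ [false]) t ∧ (n - 1) / 2 ≤ Sv (w ++ v ++ [true]) t := by
  obtain ⟨v, -, e₁, e₂⟩ := (embeds_tau_iff hn).1 ((le_Sv_iff ht.1 hw).1 h)
  simp only [subtreeAt_subtreeAt, ← List.append_assoc] at e₁ e₂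
  exact ⟨v, ht.mem_of_embeds_tau e₁, ht.mem_of_embeds_tau e₂,
    le_RHS_of_embeds (subtreeAt_finite ht.1 _) e₁, le_RHS_of_embeds (subtreeAt_finite ht.1 _) e₂⟩

lemma le_Sv_of_children {w : Word} (hf : w ++ [false] ∈ t) (htr : w ++ [true] ∈ t) {n : ℕ}
    (hn : 1 ≤ n) (h₁ : n / 2 ≤ Sv (w ++ [false]) t) (h₂ : (n - 1) / 2 ≤ Sv (w ++ [true]) t) :
    n ≤ Sv w t := by
  have hw := ht.mem_of_append hf
  rw [le_Sv_iff ht.1 hw, embeds_tau_iff hn]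
  refine ⟨[], nil_mem_subtreeAt.2 hw, ?_, ?_⟩
  · simpa using (le_Sv_iff ht.1 hf).1 h₁
  · simpa using (le_Sv_iff ht.1 htr).1 h₂

end IsBinaryTree

theorem rhs_free_fix_general (t : Set Word) (u : Word) (h : ℕ)
    (ht : IsFullBinaryTree t) (h1 : 1 ≤ h)
    (hu : u ∈ t) (humax : Sv u t = h)
    (hlexmax : ∀ w ∈ t, Sv w t = h → w = u ∨ wlex w u) :
    Sv (u ++ [decide (h % 2 = 0)]) t = (h + 1) / 2 - 1 ∧
    Sv (u ++ [decide (h % 2 = 0)]) t = (h - 1) / 2 ∧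
    h / 2 ≤ Sv (u ++ [decide (h % 2 = 1)]) t ∧
    Sv (u ++ [decide (h % 2 = 1)]) t ≤ h - 1 := by
  have hbt : IsBinaryTree t := ht.1
  have hlt {w : Word} (hw : w ≠ []) (huw : u ++ w ∈ t) : Sv (u ++ w) t < h :=
    Sv_append_lt_of_lexMax hbt.1 humax hlexmax hw huw
  obtain ⟨v, hvf, hvt, hSf, hSt⟩ := hbt.exists_children_of_le_Sv hu h1 humax.ge
  obtain rfl : v = [] := by
    by_contra hv
    exact (hlt hv (hbt.mem_of_append hvf)).not_ge (hbt.le_Sv_of_children hvf hvt h1 hSf hSt)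
  rw [List.append_nil] at hvf hvt hSf hSt
  have hf := hlt (w := [false]) (by simp) hvf
  have htr := hlt (w := [true]) (by simp) hvt
  have hnot : ¬ ((h + 1) / 2 ≤ Sv (u ++ [false]) t ∧ h / 2 ≤ Sv (u ++ [true]) t) := by
    rintro ⟨ha, hb⟩
    have := hbt.le_Sv_of_children hvf hvt (n := h + 1) (by omega) ha (by simpa using hb)
    omega
  rcases Nat.mod_two_eq_zero_or_one h with hp | hp <;> simp only [hp, decide_true, decide_false, zero_ne_one, one_ne_zero] <;> omega

/-- Let `t ≠ {∅}` be a full binary tree with `h = S(t) ≥ 1` and let `u` be the lexicographically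
maximal vertex with `S_u(t) = h`. With `t^free = θ_{u1}t` if `h` even and `θ_{u2}t` if `h` odd,
and `t^fix = θ_{u2}t` if `h` even and `θ_{u1}t` if `h` odd (`false` = child 1, `true` = child 2),
one has `S(t^fix) = ⌈h/2⌉ − 1 = ⌊(h−1)/2⌋` and `⌊h/2⌋ ≤ S(t^free) ≤ h − 1`. -/
theorem rhs_free_fix (t : Set Word) (u : Word) (h : ℕ)
    (ht : IsFullBinaryTree t) (hh : RHS t = h) (h1 : 1 ≤ h)
    (hu : u ∈ t) (humax : Sv u t = h)
    (hlexmax : ∀ w ∈ t, Sv w t = h → w = u ∨ wlex w u) :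
    Sv (u ++ [decide (h % 2 = 0)]) t = (h + 1) / 2 - 1 ∧
    Sv (u ++ [decide (h % 2 = 0)]) t = (h - 1) / 2 ∧
    h / 2 ≤ Sv (u ++ [decide (h % 2 = 1)]) t ∧
    Sv (u ++ [decide (h % 2 = 1)]) t ≤ h - 1 :=
  rhs_free_fix_general t u h ht h1 hu humax hlexmax
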